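/- arXiv:1311.5718 — 4 statements merged into one kernel-verified Lean document; each statement's English description precedes it below -/
import Mathlib

section
/- If α₁, α₂, …, α_r are roots of a crystallographic root system Φ and α₁ + α₂ + … + α_r = α is also a root of Φ, then either α₁ = α, or there exists an index i with 2 ≤ i ≤ r such that α₁ + α_i is a root or zero. -/
open scoped Pointwise RealInnerProductSpace

/-- A crystallographic root system together with a choice of simple system. -/
structure RootSystemData (V : Type*) [NormedAddCommGroup V] [InnerProductSpace ℝ V] where
  Φ : Set V
  S : Set V
  finite : Φ.Finite
  ne_zero : ∀ α ∈ Φ, α ≠ 0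
  reflect_mem : ∀ α ∈ Φ, ∀ β ∈ Φ, β - (2 * (inner ℝ β α : ℝ) / (inner ℝ α α : ℝ)) • α ∈ Φ
  crystal : ∀ α ∈ Φ, ∀ β ∈ Φ, ∃ m : ℤ, 2 * (inner ℝ β α : ℝ) / (inner ℝ α α : ℝ) = (m : ℝ)
  reduced : ∀ α ∈ Φ, ∀ t : ℝ, t • α ∈ Φ → t = 1 ∨ t = -1
  S_sub : S ⊆ Φ
  S_indep : LinearIndependent ℝ ((↑) : S → V)
  decomp : ∀ α ∈ Φ, α ∈ AddSubmonoid.closure S ∨ -α ∈ AddSubmonoid.closure S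

namespace RootSystemData

variable {V : Type*} [NormedAddCommGroup V] [InnerProductSpace ℝ V] (D : RootSystemData V)

/-- The positive roots. -/
def pos : Set V := {α ∈ D.Φ | α ∈ AddSubmonoid.closure D.S}

/-- The root poset order: `α ≤ β` iff `β - α` is a nonnegative integer combination
of simple roots. -/
def rle (α β : V) : Prop := β - α ∈ AddSubmonoid.closure D.S

/-- An (order) ideal of the root poset. -/
def IsIdeal (I : Set V) : Prop :=
  I ⊆ D.pos ∧ ∀ α ∈ I, ∀ β ∈ D.pos, D.rle β α → β ∈ I

/-- The order filters complementary to a chain of ideals, with the conventions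
`J 0 = Φ⁺` (as `I 0 = ∅`) and `J i = J k` for `i > k`. -/
def Jf (k : ℕ) (I : ℕ → Set V) (i : ℕ) : Set V := D.pos \ I (min i k)

/-- A geometric chain of `k` ideals in the root poset. -/
structure IsGeomChain (k : ℕ) (I : ℕ → Set V) : Prop where
  zero : I 0 = ∅
  ideal : ∀ i, 1 ≤ i → i ≤ k → D.IsIdeal (I i)
  mono : ∀ i j, i ≤ j → j ≤ k → I i ⊆ I j
  geomI : ∀ i j, i + j ≤ k → (I i + I j) ∩ D.pos ⊆ I (i + j)
  geomJ : ∀ i j, (D.Jf k I i + D.Jf k I j) ∩ D.pos ⊆ D.Jf k I (i + j)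

/-- A chain of ideals is positive if `S ⊆ I k`. -/
def IsPositiveChain (k : ℕ) (I : ℕ → Set V) : Prop := D.S ⊆ I k

/-- The set of values `r₁ + … + r_m` over all expressions `α = α₁ + … + α_m` with
`α_i ∈ I (r i)` and `1 ≤ r i ≤ k`; its least element (when it exists) is `r_α(𝓘)`. -/
def rVals (_D : RootSystemData V) (k : ℕ) (I : ℕ → Set V) (α : V) : Set ℕ :=
  {N | ∃ m : ℕ, ∃ a : Fin m → V, ∃ r : Fin m → ℕ,
    (∀ i, 1 ≤ r i ∧ r i ≤ k ∧ a i ∈ I (r i)) ∧ (∑ i, a i) = α ∧ (∑ i, r i) = N}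

/-- The extension `𝓘̲` of a geometric chain of `k` ideals to a chain of `k+1` ideals,
with `I̲_{k+1} = ⋃_{i+j=k+1} ((I_i + I_j) ∩ Φ⁺) ∪ I_k ∪ S`. -/
def Ibar (k : ℕ) (I : ℕ → Set V) : ℕ → Set V := fun i =>
  if i ≤ k then I i
  else (⋃ (p : ℕ × ℕ) (_ : p.1 + p.2 = k + 1), (I p.1 + I p.2) ∩ D.pos) ∪ I k ∪ D.S

/-- `α` is a rank `r` indecomposable element of the chain of ideals `I`. -/
def IsIndec (k : ℕ) (I : ℕ → Set V) (r : ℕ) (α : V) : Prop :=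
  α ∈ I r ∧ IsLeast (D.rVals k I α) r ∧
  (∀ i j, i + j = r → α ∉ I i + I j) ∧
  (∀ β ∈ D.pos, ∀ t, t ≤ k → IsLeast (D.rVals k I (α + β)) t → β ∈ I (t - r))

/-- The complement of the `k`-Catalan arrangement of `Φ`. -/
def catComp (k : ℕ) : Set V :=
  {x | ∀ α ∈ D.Φ, ∀ r : ℕ, r ≤ k → (inner ℝ x α : ℝ) ≠ (r : ℝ)}

/-- A region of the `k`-Catalan arrangement: a connected component of the complement. -/
def IsRegion (k : ℕ) (R : Set V) : Prop :=
  ∃ x ∈ D.catComp k, R = connectedComponentIn (D.catComp k) x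

/-- A dominant region of the `k`-Catalan arrangement. -/
def IsDomRegion (k : ℕ) (R : Set V) : Prop :=
  D.IsRegion k R ∧ ∀ x ∈ R, ∀ α ∈ D.pos, 0 < (inner ℝ x α : ℝ)

/-- The complement of the affine Coxeter arrangement of `Φ`. -/
def affComp : Set V := {x | ∀ α ∈ D.Φ, ∀ r : ℤ, (inner ℝ x α : ℝ) ≠ (r : ℝ)}

/-- An alcove: a connected component of the complement of the affine Coxeter arrangement. -/
def IsAlcove (A : Set V) : Prop :=
  ∃ x ∈ D.affComp, A = connectedComponentIn D.affComp x

/-- The hyperplane `H_α^r` supports a facet of `R`. -/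
def IsWall (_D : RootSystemData V) (R : Set V) (α : V) (r : ℝ) : Prop :=
  ∃ x, (inner ℝ x α : ℝ) = r ∧ ∃ ε > 0, ∀ y, (inner ℝ y α : ℝ) = r → dist y x < ε → y ∈ closure R

/-- `H_α^r` is a ceiling of the dominant region (or alcove) `R`: a wall not through
the origin with `R` on the same side as the origin. -/
def IsCeiling (R : Set V) (α : V) (r : ℝ) : Prop :=
  D.IsWall R α r ∧ 0 < r ∧ ∀ x ∈ R, (inner ℝ x α : ℝ) < r

/-- `H_α^r` is a floor of the dominant region (or alcove) `R`: a wall not through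
the origin separating `R` from the origin. -/
def IsFloor (R : Set V) (α : V) (r : ℝ) : Prop :=
  D.IsWall R α r ∧ 0 < r ∧ ∀ x ∈ R, r < (inner ℝ x α : ℝ)

/-- The chain of ideals `θ(R)` associated to a dominant region `R`. -/
def theta (R : Set V) : ℕ → Set V := fun i =>
  {α ∈ D.pos | ∀ x ∈ R, (inner ℝ x α : ℝ) < (i : ℝ)}

/-- `B` is the maximal alcove of the (bounded) region corresponding to the positive chain
of ideals `I`, i.e. the alcove with `r(B,α) = r_α(𝓘)` for all positive roots `α`. -/
def IsMaxAlcoveOf (k : ℕ) (I : ℕ → Set V) (B : Set V) : Prop :=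
  D.IsAlcove B ∧ ∀ α ∈ D.pos, ∃ r : ℕ, IsLeast (D.rVals k I α) r ∧
    ∀ x ∈ B, ((r : ℝ) - 1 < (inner ℝ x α : ℝ) ∧ (inner ℝ x α : ℝ) < (r : ℝ))

/-- The root system `Φ` is irreducible. -/
def Irred : Prop :=
  ∀ Φ₁ Φ₂ : Set V, Φ₁ ∪ Φ₂ = D.Φ → (∀ a ∈ Φ₁, ∀ b ∈ Φ₂, (inner ℝ a b : ℝ) = 0) →
    Φ₁ = ∅ ∨ Φ₂ = ∅

end RootSystemData

/-!
Two roots `x, y` with `⟪x, y⟫ < 0` add up to a root or to zero: either they are proportional,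
or strict Cauchy–Schwarz makes the product of their two negative Cartan integers less than 4,
so one of them is `-1` and a reflection produces `x + y`.

Put `γ = α₁` and `β = α₂ + ⋯ + α_r ≠ 0`, and suppose no `γ + α_i` is a root or zero, so that
`⟪γ, α_i⟫ ≥ 0` for all `i ≥ 2`. As `⟪β, γ + β⟫ > 0`, some `α_i` pairs positively with the root
`γ + β`, so `γ + β - α_i` is a root or zero. Zero is impossible, since then
`⟪γ, γ⟫ = -∑_{j ≠ i} ⟪γ, α_j⟫ ≤ 0`; so `γ + ∑_{j ≠ i} α_j` is a root, and we induct on the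
number of summands.
-/

namespace RootSystemData

variable {V : Type*} [NormedAddCommGroup V] [InnerProductSpace ℝ V] (D : RootSystemData V)

theorem add_mem_of_pairing_eq_neg_one {α β : V} (hα : α ∈ D.Φ) (hβ : β ∈ D.Φ)
    (h : 2 * ⟪β, α⟫ / ⟪α, α⟫ = -1) : β + α ∈ D.Φ := by
  have := D.reflect_mem α hα β hβ
  rwa [h, neg_one_smul, sub_neg_eq_add] at this

theorem neg_mem {α : V} (hα : α ∈ D.Φ) : -α ∈ D.Φ := by
  have hpair : 2 * ⟪α, α⟫ / ⟪α, α⟫ = 2 :=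
    mul_div_cancel_right₀ 2 (real_inner_self_pos.2 (D.ne_zero α hα)).ne'
  have := D.reflect_mem α hα α hα
  rwa [hpair, two_smul, sub_add_cancel_left] at this

theorem add_mem_or_eq_zero_of_inner_neg {x y : V} (hx : x ∈ D.Φ) (hy : y ∈ D.Φ)
    (hxy : ⟪x, y⟫ < 0) : x + y ∈ D.Φ ∨ x + y = 0 := by
  have hx0 := D.ne_zero x hx
  have hy0 := D.ne_zero y hy
  by_cases hcs : |⟪x, y⟫| = ‖x‖ * ‖y‖
  · obtain ⟨t, -, rfl⟩ := (norm_inner_eq_norm_iff (𝕜 := ℝ) hx0 hy0).1 hcs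
    rcases D.reduced x hx t hy with rfl | rfl
    · exact absurd hxy (by simp)
    · simp
  left
  have hxx := real_inner_self_pos.2 hx0
  have hyy := real_inner_self_pos.2 hy0
  have hlt : ⟪x, y⟫ ^ 2 < ⟪x, x⟫ * ⟪y, y⟫ := by
    rw [real_inner_self_eq_norm_sq, real_inner_self_eq_norm_sq, ← sq_abs, ← mul_pow]
    exact pow_lt_pow_left₀ ((abs_real_inner_le_norm x y).lt_of_ne hcs) (abs_nonneg _) two_ne_zero
  obtain ⟨m, hm⟩ := D.crystal y hy x hx
  obtain ⟨n, hn⟩ := D.crystal x hx y hy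
  rw [real_inner_comm] at hn
  have hm0 : m < 0 := by exact_mod_cast hm ▸ div_neg_of_neg_of_pos (by linarith) hyy
  have hn0 : n < 0 := by exact_mod_cast hn ▸ div_neg_of_neg_of_pos (by linarith) hxx
  have hmn : m * n < 4 := by
    have : (m : ℝ) * n < 4 := by
      rw [← hm, ← hn, div_mul_div_comm, div_lt_iff₀ (by positivity)]
      linarith
    exact_mod_cast this
  obtain rfl | rfl : m = -1 ∨ n = -1 := by
    by_contra! h
    nlinarith [show m ≤ -2 by omega, show n ≤ -2 by omega]
  · exact D.add_mem_of_pairing_eq_neg_one hy hx (by rw [hm]; simp)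
  · rw [add_comm]
    exact D.add_mem_of_pairing_eq_neg_one hx hy (by rw [real_inner_comm, hn]; simp)

open Finset in
theorem exists_add_mem_or_eq_zero_of_add_sum_mem {ι : Type*} [DecidableEq ι] {γ : V}
    (hγ : γ ∈ D.Φ) (a : ι → V) (T : Finset ι) (ha : ∀ i ∈ T, a i ∈ D.Φ)
    (hT : ∑ i ∈ T, a i ≠ 0) (hγT : γ + ∑ i ∈ T, a i ∈ D.Φ) :
    ∃ i ∈ T, γ + a i ∈ D.Φ ∨ γ + a i = 0 := by
  induction T using Finset.strongInduction with
  | H T ih =>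
  by_contra! hcon
  have hnonneg : ∀ i ∈ T, 0 ≤ ⟪γ, a i⟫ := fun i hi => not_lt.1 fun hneg =>
    (D.add_mem_or_eq_zero_of_inner_neg hγ (ha i hi) hneg).elim (hcon i hi).1 (hcon i hi).2
  set β := ∑ i ∈ T, a i with hβ
  obtain ⟨i, hi, hpos⟩ : ∃ i ∈ T, 0 < ⟪a i, γ + β⟫ := by
    refine exists_lt_of_sum_lt ?_
    have hγβ : 0 ≤ ⟪γ, β⟫ := by rw [hβ, inner_sum]; exact sum_nonneg hnonneg
    have hββ := real_inner_self_pos.2 hT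
    rw [sum_const_zero, ← sum_inner, ← hβ, inner_add_right, real_inner_comm]
    linarith
  have hsplit : β = a i + ∑ j ∈ T.erase i, a j := (add_sum_erase T a hi).symm
  have hobtuse : ⟪γ + β, -a i⟫ < 0 := by rw [inner_neg_right, real_inner_comm]; linarith
  rcases D.add_mem_or_eq_zero_of_inner_neg hγT (D.neg_mem (ha i hi)) hobtuse with hmem | hzero
  · have hrest : γ + ∑ j ∈ T.erase i, a j ∈ D.Φ := by
      convert hmem using 1
      rw [hsplit]
      abel
    by_cases hrest0 : ∑ j ∈ T.erase i, a j = 0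
    · exact (hcon i hi).1 (by rwa [hsplit, hrest0, add_zero] at hγT)
    · obtain ⟨j, hj, hγj⟩ := ih _ (erase_ssubset hi)
        (fun j hj => ha j (mem_of_mem_erase hj)) hrest0 hrest
      exact hγj.elim (hcon j (mem_of_mem_erase hj)).1 (hcon j (mem_of_mem_erase hj)).2
  · have hγ' : γ = -∑ j ∈ T.erase i, a j := by
      rw [hsplit] at hzero
      linear_combination (norm := abel) hzero
    have hγγ : ⟪γ, γ⟫ ≤ 0 := by
      nth_rewrite 2 [hγ']
      rw [inner_neg_right, inner_sum, neg_nonpos]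
      exact sum_nonneg fun j hj => hnonneg j (mem_of_mem_erase hj)
    exact D.ne_zero γ hγ (real_inner_self_nonpos.1 hγγ)

end RootSystemData

/-- If `α₁,…,α_r ∈ Φ` and `α₁ + … + α_r = α ∈ Φ`, then `α₁ = α` or
there is `i` with `2 ≤ i ≤ r` such that `α₁ + α_i ∈ Φ ∪ {0}`. -/
theorem statement0 {V : Type*} [NormedAddCommGroup V] [InnerProductSpace ℝ V]
    (D : RootSystemData V) (r : ℕ) (hr : 0 < r) (a : Fin r → V)
    (ha : ∀ i, a i ∈ D.Φ) (α : V) (hα : α ∈ D.Φ) (hsum : ∑ i, a i = α) :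
    a ⟨0, hr⟩ = α ∨
      ∃ i : Fin r, 0 < (i : ℕ) ∧ (a ⟨0, hr⟩ + a i ∈ D.Φ ∨ a ⟨0, hr⟩ + a i = 0) := by
  set z : Fin r := ⟨0, hr⟩
  by_cases hz : a z = α
  · exact Or.inl hz
  right
  have hsplit : a z + ∑ i ∈ Finset.univ.erase z, a i = α := by
    rw [Finset.add_sum_erase _ _ (Finset.mem_univ z), hsum]
  obtain ⟨i, hi, hroot⟩ := D.exists_add_mem_or_eq_zero_of_add_sum_mem (ha z) a _ (fun i _ => ha i)
    (fun h => hz (by rwa [h, add_zero] at hsplit)) (hsplit ▸ hα)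
  exact ⟨i, Nat.pos_of_ne_zero fun h => Finset.ne_of_mem_erase hi (Fin.ext h), hroot⟩
end

section
/- Let 𝓘 = (I₁,…,I_k) be a geometric chain of ideals in the root poset of Φ with extension 𝓘̲ = (I₁,…,I_k, I̲_{k+1}) where I̲_{k+1} = ⋃_{i+j=k+1}((I_i + I_j) ∩ Φ⁺) ∪ I_k ∪ S. If α ∈ Φ⁺ lies in the nonnegative integer span of supp(𝓘) = I_k ∩ S, then r_α(𝓘̲) = r_α(𝓘). -/
open scoped Pointwise RealInnerProductSpace

/-!
Every term `x ∈ I̲_{k+1}` of a decomposition of `α` can be traded for a decomposition of `x` in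
`𝓘` of rank at most `k + 1`: an element of `(I_i + I_j) ∩ Φ⁺` with `i + j = k + 1` splits into
two terms of ranks `i` and `j`, and an element of `I_k` has rank `k`. The remaining terms are
simple roots `s ∉ I_k`, and these cannot occur: the coordinate functional of `s` with respect to
the linearly independent set `S` is nonnegative on every term, positive on `s`, and vanishes on
`α` because `α` is supported on `I_k ∩ S`.
-/

open Submodule in
theorem mem_of_sum_mem_closure_inter {K V ι : Type*} [Field K] [LinearOrder K]
    [IsStrictOrderedRing K] [AddCommGroup V] [Module K V] [Fintype ι] {S T : Set V}
    (hS : LinearIndepOn K id S) {a : ι → V} (ha : ∀ j, a j ∈ AddSubmonoid.closure S)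
    (hsum : ∑ j, a j ∈ AddSubmonoid.closure (T ∩ S)) {i : ι} (hiS : a i ∈ S) : a i ∈ T := by
  by_contra hiT
  obtain ⟨f, hf0, hfi⟩ := LinearMap.exists_extend_of_notMem
    (0 : span K (S \ {a i}) →ₗ[K] K) (by simpa using hS.notMem_span hiS) 1
  have hvanish : ∀ t ∈ S, t ≠ a i → f t = 0 := fun t ht hti => by
    simpa using congr($hf0 ⟨t, subset_span ⟨ht, hti⟩⟩)
  have hnonneg : AddSubmonoid.closure S ≤ (AddSubmonoid.nonneg K).comap f.toAddMonoidHom := by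
    refine AddSubmonoid.closure_le.mpr fun t ht => ?_
    by_cases hti : t = a i
    · simp [hti, hfi]
    · simp [hvanish t ht hti]
  have hzero : AddSubmonoid.closure (T ∩ S) ≤ (LinearMap.ker f).toAddSubmonoid :=
    AddSubmonoid.closure_le.mpr fun t ht =>
      hvanish t ht.2 fun hti => hiT (hti ▸ ht.1)
  have hle : f (a i) ≤ f (∑ j, a j) := by
    rw [map_sum]
    exact Finset.single_le_sum (fun j _ => hnonneg (ha j)) (Finset.mem_univ i)
  have : f (∑ j, a j) = 0 := hzero hsum
  linarith

theorem isLeast_iff_of_subset_of_forall_exists_le {α : Type*} [PartialOrder α] {s t : Set α}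
    (hst : s ⊆ t) (h : ∀ b ∈ t, ∃ a ∈ s, a ≤ b) {r : α} : IsLeast t r ↔ IsLeast s r := by
  constructor
  · rintro ⟨hr, hlb⟩
    obtain ⟨a, ha, har⟩ := h r hr
    rw [le_antisymm har (hlb (hst ha))] at ha
    exact ⟨ha, fun b hb => hlb (hst hb)⟩
  · rintro ⟨hr, hlb⟩
    refine ⟨hst hr, fun b hb => ?_⟩
    obtain ⟨a, ha, hab⟩ := h b hb
    exact (hlb ha).trans hab

theorem one_le_of_mem_of_zero_eq_empty {X : Type*} {I : ℕ → Set X} (h0 : I 0 = ∅) {i : ℕ} {x : X}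
    (hx : x ∈ I i) : 1 ≤ i :=
  Nat.one_le_iff_ne_zero.mpr <| by rintro rfl; simp [h0] at hx

namespace RootSystemData

variable {V : Type*} [NormedAddCommGroup V] [InnerProductSpace ℝ V] (D : RootSystemData V)
  {k : ℕ} {I : ℕ → Set V}

theorem zero_mem_rVals_zero : 0 ∈ D.rVals k I 0 :=
  ⟨0, Fin.elim0, Fin.elim0, fun i => i.elim0, by simp, by simp⟩

theorem mem_rVals_of_mem {r : ℕ} {x : V} (h1 : 1 ≤ r) (hk : r ≤ k) (hx : x ∈ I r) :
    r ∈ D.rVals k I x :=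
  ⟨1, fun _ => x, fun _ => r, fun _ => ⟨h1, hk, hx⟩, by simp, by simp⟩

theorem add_mem_rVals {M N : ℕ} {x y : V} (hM : M ∈ D.rVals k I x) (hN : N ∈ D.rVals k I y) :
    M + N ∈ D.rVals k I (x + y) := by
  obtain ⟨m, a, r, hr, rfl, rfl⟩ := hM
  obtain ⟨n, b, s, hs, rfl, rfl⟩ := hN
  exact ⟨m + n, Fin.append a b, Fin.append r s,
    Fin.addCases (by simpa using hr) (by simpa using hs),
    by simp [Fin.sum_univ_add], by simp [Fin.sum_univ_add]⟩

theorem sum_mem_rVals {ι : Type*} (s : Finset ι) {a : ι → V} {N : ι → ℕ}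
    (h : ∀ i ∈ s, N i ∈ D.rVals k I (a i)) : ∑ i ∈ s, N i ∈ D.rVals k I (∑ i ∈ s, a i) := by
  induction s using Finset.cons_induction with
  | empty => simpa using D.zero_mem_rVals_zero
  | cons i s _ ih =>
    rw [Finset.sum_cons, Finset.sum_cons]
    exact D.add_mem_rVals (h i (Finset.mem_cons_self i s))
      (ih fun j hj => h j (Finset.mem_cons_of_mem hj))

theorem Ibar_of_le {i : ℕ} (hi : i ≤ k) : D.Ibar k I i = I i := if_pos hi

theorem Ibar_succ :
    D.Ibar k I (k + 1) =
      (⋃ (p : ℕ × ℕ) (_ : p.1 + p.2 = k + 1), (I p.1 + I p.2) ∩ D.pos) ∪ I k ∪ D.S :=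
  if_neg (by omega)

theorem rVals_subset_rVals_Ibar (α : V) : D.rVals k I α ⊆ D.rVals (k + 1) (D.Ibar k I) α := by
  rintro N ⟨m, a, r, hr, hsum, hN⟩
  refine ⟨m, a, r, fun i => ?_, hsum, hN⟩
  obtain ⟨h1, hk, hi⟩ := hr i
  exact ⟨h1, by omega, by rwa [D.Ibar_of_le hk]⟩

theorem exists_le_of_mem_Ibar_succ (h0 : I 0 = ∅) {x : V} (hx : x ∈ D.Ibar k I (k + 1))
    (hxS : x ∈ D.S → x ∈ I k) : ∃ N ∈ D.rVals k I x, N ≤ k + 1 := by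
  have of_mem_top : x ∈ I k → ∃ N ∈ D.rVals k I x, N ≤ k + 1 := fun hxk =>
    ⟨k, D.mem_rVals_of_mem (one_le_of_mem_of_zero_eq_empty h0 hxk) le_rfl hxk, by omega⟩
  rw [Ibar_succ] at hx
  rcases hx with (hx | hxk) | hxS'
  · obtain ⟨⟨p, q⟩, hpq, ⟨b, hb, c, hc, rfl⟩, -⟩ := Set.mem_iUnion₂.mp hx
    have hp := one_le_of_mem_of_zero_eq_empty h0 hb
    have hq := one_le_of_mem_of_zero_eq_empty h0 hc
    exact ⟨p + q, D.add_mem_rVals (D.mem_rVals_of_mem hp (by omega) hb)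
      (D.mem_rVals_of_mem hq (by omega) hc), hpq.le⟩
  · exact of_mem_top hxk
  · exact of_mem_top (hxS hxS')

namespace IsGeomChain

variable {D}

theorem subset_pos (h : D.IsGeomChain k I) {i : ℕ} (hi : i ≤ k) : I i ⊆ D.pos := by
  rcases Nat.eq_zero_or_pos i with rfl | hi0
  · simp [h.zero]
  · exact (h.ideal i hi0 hi).1

theorem Ibar_subset_closure (h : D.IsGeomChain k I) {i : ℕ} (hi : i ≤ k + 1) :
    D.Ibar k I i ⊆ AddSubmonoid.closure D.S := by
  rcases hi.lt_or_eq with hi | rfl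
  · rw [D.Ibar_of_le (by omega)]
    exact fun x hx => (h.subset_pos (by omega) hx).2
  · rw [Ibar_succ]
    rintro x ((hx | hx) | hx)
    · obtain ⟨_, _, hx⟩ := Set.mem_iUnion₂.mp hx
      exact hx.2.2
    · exact (h.subset_pos le_rfl hx).2
    · exact AddSubmonoid.subset_closure hx

theorem exists_le_of_mem_rVals_Ibar (h : D.IsGeomChain k I) {α : V}
    (hsupp : α ∈ AddSubmonoid.closure (I k ∩ D.S)) {N : ℕ}
    (hN : N ∈ D.rVals (k + 1) (D.Ibar k I) α) : ∃ N' ∈ D.rVals k I α, N' ≤ N := by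
  obtain ⟨m, a, r, hr, rfl, rfl⟩ := hN
  have hpiece : ∀ i, ∃ Ni ∈ D.rVals k I (a i), Ni ≤ r i := by
    intro i
    obtain ⟨h1, hle, hi⟩ := hr i
    rcases hle.lt_or_eq with hlt | heq
    · rw [D.Ibar_of_le (by omega)] at hi
      exact ⟨r i, D.mem_rVals_of_mem h1 (by omega) hi, le_rfl⟩
    · rw [heq] at hi ⊢
      exact D.exists_le_of_mem_Ibar_succ h.zero hi fun hS => mem_of_sum_mem_closure_inter
        D.S_indep (fun j => h.Ibar_subset_closure (hr j).2.1 (hr j).2.2) hsupp hS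
  choose N hN hNr using hpiece
  exact ⟨∑ i, N i, D.sum_mem_rVals _ fun i _ => hN i, Finset.sum_le_sum fun i _ => hNr i⟩

end IsGeomChain

end RootSystemData

theorem statement6_general {V : Type*} [NormedAddCommGroup V] [InnerProductSpace ℝ V]
    (D : RootSystemData V) (k : ℕ) (I : ℕ → Set V) (h : D.IsGeomChain k I)
    (α : V) (hsupp : α ∈ AddSubmonoid.closure (I k ∩ D.S)) :
    ∀ r : ℕ, IsLeast (D.rVals (k + 1) (D.Ibar k I) α) r ↔ IsLeast (D.rVals k I α) r := fun _ =>
  isLeast_iff_of_subset_of_forall_exists_le (D.rVals_subset_rVals_Ibar α)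
    fun _ hN => h.exists_le_of_mem_rVals_Ibar hsupp hN

/-- If `α ∈ Φ⁺` lies in the nonnegative integer span of
`supp(𝓘) = I_k ∩ S`, then `r_α(𝓘̲) = r_α(𝓘)`. -/
theorem statement6 {V : Type*} [NormedAddCommGroup V] [InnerProductSpace ℝ V]
    (D : RootSystemData V) (k : ℕ) (I : ℕ → Set V) (h : D.IsGeomChain k I)
    (α : V) (hα : α ∈ D.pos) (hsupp : α ∈ AddSubmonoid.closure (I k ∩ D.S)) :
    ∀ r : ℕ, IsLeast (D.rVals (k + 1) (D.Ibar k I) α) r ↔ IsLeast (D.rVals k I α) r :=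
  statement6_general D k I h α hsupp
end

section
/- Let R be a dominant region of the k-Catalan arrangement of Φ and let 𝓘 = θ(R) be its geometric chain of ideals. If the hyperplane H_α^r = {x : ⟨x,α⟩ = r} is a ceiling of R (a wall of R not through the origin with R on the origin's side), then α is a rank r indecomposable element of 𝓘. -/
open scoped Pointwise RealInnerProductSpace

/-!
Pick `x₀` in the relative interior of the facet of `R` on `H_α^r`. Every bound `⟪x, γ⟫ < i`
(`γ ∈ I_i`) valid on `R`, and hence every bound coming from a decomposition of `α` or `α + β`,
persists on `closure R`; evaluating at `x₀`, where `⟪x₀, α⟫ = r`, gives `r_α(𝓘) = r` and the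
inequalities needed for the other two conditions. If one of them failed, some positive root `β`
would have `⟪·, β⟫` extremal on `closure R` at `x₀`. As `closure R` contains a neighbourhood of
`x₀` in `H_α^r`, `⟪·, β⟫` is then constant on `H_α^r`, so `β` is a multiple of `α`, and
reducedness and positivity force `β = α`, which is absurd in either case.
-/

open Filter Topology

theorem IsPreconnected.forall_lt_of_lt {X α : Type*} [TopologicalSpace X] [LinearOrder α]
    [TopologicalSpace α] [OrderClosedTopology α] {s : Set X} (hs : IsPreconnected s)
    {f : X → α} (hf : ContinuousOn f s) {c : α} (hne : ∀ x ∈ s, f x ≠ c) {a : X} (ha : a ∈ s)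
    (hlt : c < f a) : ∀ x ∈ s, c < f x := by
  intro x hx
  by_contra! hle
  obtain ⟨y, hy, hyc⟩ := hs.intermediate_value hx ha hf ⟨hle, hlt.le⟩
  exact hne y hy hyc

section InnerProduct

variable {V : Type*} [NormedAddCommGroup V] [InnerProductSpace ℝ V]

theorem inner_le_of_mem_closure {s : Set V} {v : V} {c : ℝ} (h : ∀ x ∈ s, ⟪x, v⟫ ≤ c)
    {y : V} (hy : y ∈ closure s) : ⟪y, v⟫ ≤ c :=
  closure_minimal (t := {x | ⟪x, v⟫ ≤ c}) h (isClosed_le (by fun_prop) (by fun_prop)) hy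

theorem le_inner_of_mem_closure {s : Set V} {v : V} {c : ℝ} (h : ∀ x ∈ s, c ≤ ⟪x, v⟫)
    {y : V} (hy : y ∈ closure s) : c ≤ ⟪y, v⟫ :=
  closure_minimal (t := {x | c ≤ ⟪x, v⟫}) h (isClosed_le (by fun_prop) (by fun_prop)) hy

theorem inner_eq_zero_of_isLocalExtrOn_hyperplane {α β x₀ w : V} {r : ℝ}
    (hx₀ : ⟪x₀, α⟫ = r) (hextr : IsLocalExtrOn (⟪·, β⟫) {y | ⟪y, α⟫ = r} x₀)
    (hw : ⟪w, α⟫ = 0) : ⟪w, β⟫ = 0 := by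
  have hline : Tendsto (fun t : ℝ => x₀ + t • w) (𝓝 0) (𝓝[{y | ⟪y, α⟫ = r}] x₀) := by
    refine tendsto_nhdsWithin_iff.mpr ⟨?_, .of_forall fun t => ?_⟩
    · exact Continuous.tendsto' (by fun_prop) _ _ (by simp)
    · simp [inner_add_left, real_inner_smul_left, hx₀, hw]
  have hextr' : IsLocalExtr ((⟪·, β⟫) ∘ fun t : ℝ => x₀ + t • w) 0 := by
    refine IsExtrFilter.comp_tendsto ?_ hline
    rw [zero_smul, add_zero]
    exact hextr
  have hcomp : ((⟪·, β⟫) ∘ fun t : ℝ => x₀ + t • w) = fun t => ⟪x₀, β⟫ + t * ⟪w, β⟫ := by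
    ext t
    simp [inner_add_left, real_inner_smul_left]
  rw [hcomp] at hextr'
  exact hextr'.hasDerivAt_eq_zero (by simpa using ((hasDerivAt_id (0 : ℝ)).mul_const ⟪w, β⟫).const_add ⟪x₀, β⟫)

theorem mem_span_singleton_of_isLocalExtrOn_hyperplane {α β x₀ : V} {r : ℝ}
    (hx₀ : ⟪x₀, α⟫ = r) (hextr : IsLocalExtrOn (⟪·, β⟫) {y | ⟪y, α⟫ = r} x₀) :
    β ∈ ℝ ∙ α := by
  rw [← Submodule.orthogonal_orthogonal (ℝ ∙ α), Submodule.mem_orthogonal]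
  intro w hw
  rw [Submodule.mem_orthogonal_singleton_iff_inner_left] at hw
  exact inner_eq_zero_of_isLocalExtrOn_hyperplane hx₀ hextr hw

end InnerProduct

namespace RootSystemData

variable {V : Type*} [NormedAddCommGroup V] [InnerProductSpace ℝ V] {D : RootSystemData V}

theorem eq_of_mem_span_singleton {x α β : V} (hx : ∀ γ ∈ D.pos, 0 < ⟪x, γ⟫)
    (hα : α ∈ D.pos) (hβ : β ∈ D.pos) (hβα : β ∈ ℝ ∙ α) : β = α := by
  obtain ⟨c, rfl⟩ := Submodule.mem_span_singleton.mp hβα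
  rcases D.reduced α hα.1 c hβ.1 with rfl | rfl
  · exact one_smul ℝ α
  · have hneg := hx _ hβ
    rw [real_inner_smul_right] at hneg
    linarith [hx α hα]

theorem eq_of_isExtrOn_of_eventually_mem {s : Set V} {x α β x₀ : V} {r : ℝ}
    (hx : ∀ γ ∈ D.pos, 0 < ⟪x, γ⟫) (hα : α ∈ D.pos) (hβ : β ∈ D.pos) (hx₀ : ⟪x₀, α⟫ = r)
    (hnear : ∀ᶠ y in 𝓝[{y | ⟪y, α⟫ = r}] x₀, y ∈ s) (hextr : IsExtrOn (⟪·, β⟫) s x₀) :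
    β = α :=
  D.eq_of_mem_span_singleton hx hα hβ <|
    mem_span_singleton_of_isLocalExtrOn_hyperplane hx₀ <|
      hextr.filter_mono (le_principal_iff.mpr hnear)

theorem mem_rVals_of_mem_s9 {k n : ℕ} {I : ℕ → Set V} {a : V} (ha : a ∈ I n) (hn : 1 ≤ n)
    (hnk : n ≤ k) : n ∈ D.rVals k I a :=
  ⟨1, fun _ => a, fun _ => n, fun _ => ⟨hn, hnk, ha⟩, by simp, by simp⟩

theorem inner_le_of_mem_rVals_theta {k N : ℕ} {R : Set V} {v x : V}
    (hN : N ∈ D.rVals k (D.theta R) v) (hx : x ∈ R) : ⟪x, v⟫ ≤ N := by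
  obtain ⟨m, a, n, ha, rfl, rfl⟩ := hN
  rw [inner_sum]
  push_cast
  exact Finset.sum_le_sum fun i _ => ((ha i).2.2.2 x hx).le

theorem inner_le_of_mem_theta {i : ℕ} {R : Set V} {γ y : V} (hγ : γ ∈ D.theta R i)
    (hy : y ∈ closure R) : ⟪y, γ⟫ ≤ i :=
  inner_le_of_mem_closure (fun x hx => (hγ.2 x hx).le) hy

theorem IsRegion.forall_lt_inner_of_le_inner {k s : ℕ} {R : Set V} (hR : D.IsRegion k R)
    {β a : V} (hβ : β ∈ D.Φ) (hs : s ≤ k) (ha : a ∈ R) (hle : (s : ℝ) ≤ ⟪a, β⟫) :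
    ∀ x ∈ R, (s : ℝ) < ⟪x, β⟫ := by
  obtain ⟨z, -, rfl⟩ := hR
  have hne : ∀ x ∈ connectedComponentIn (D.catComp k) z, ⟪x, β⟫ ≠ s :=
    fun x hx => connectedComponentIn_subset _ _ hx β hβ s hs
  exact isPreconnected_connectedComponentIn.forall_lt_of_lt (by fun_prop) hne ha
    (hle.lt_of_ne (hne a ha).symm)

theorem IsWall.exists_eventually_mem_closure {R : Set V} {α : V} {r : ℝ}
    (h : D.IsWall R α r) :
    ∃ x₀, ⟪x₀, α⟫ = r ∧ ∀ᶠ y in 𝓝[{y | ⟪y, α⟫ = r}] x₀, y ∈ closure R := by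
  obtain ⟨x₀, hx₀, ε, hε, hball⟩ := h
  exact ⟨x₀, hx₀, eventually_nhdsWithin_iff.mpr
    (Metric.eventually_nhds_iff.mpr ⟨ε, hε, fun y hy hyH => hball y hyH hy⟩)⟩

section Ceiling

variable {k : ℕ} {R : Set V} {α x₀ : V} {r : ℕ}

theorem isLeast_rVals_of_inner_eq (hr : 1 ≤ r) (hrk : r ≤ k) (hmem : α ∈ D.theta R r)
    (hx₀ : ⟪x₀, α⟫ = r) (hx₀R : x₀ ∈ closure R) :
    IsLeast (D.rVals k (D.theta R) α) r := by
  refine ⟨mem_rVals_of_mem_s9 hmem hr hrk, fun N hN => ?_⟩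
  have hle := inner_le_of_mem_closure (fun x hx => inner_le_of_mem_rVals_theta hN hx) hx₀R
  exact_mod_cast hx₀ ▸ hle

theorem notMem_theta_add_theta (hdom : ∀ x ∈ R, ∀ γ ∈ D.pos, 0 < ⟪x, γ⟫) (hα : α ∈ D.pos)
    (hx₀ : ⟪x₀, α⟫ = r) (hnear : ∀ᶠ y in 𝓝[{y | ⟪y, α⟫ = (r : ℝ)}] x₀, y ∈ closure R)
    {i j : ℕ} (hij : i + j = r) : α ∉ D.theta R i + D.theta R j := by
  rintro ⟨β, hβ, γ, hγ, rfl⟩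
  have hx₀R : x₀ ∈ closure R := hnear.self_of_nhdsWithin hx₀
  obtain ⟨z, hz⟩ := closure_nonempty_iff.mp ⟨x₀, hx₀R⟩
  have hβx₀ : ⟪x₀, β⟫ = i := by
    have hβle := inner_le_of_mem_theta hβ hx₀R
    have hγle := inner_le_of_mem_theta hγ hx₀R
    rw [inner_add_right, ← hij] at hx₀
    push_cast at hx₀
    linarith
  have hβα : β = β + γ := D.eq_of_isExtrOn_of_eventually_mem (hdom z hz) hα hβ.1 hx₀ hnear
    (IsMaxOn.isExtr fun y hy => hβx₀ ▸ inner_le_of_mem_theta hβ hy)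
  exact D.ne_zero γ hγ.1.1 (by simpa using hβα)

theorem mem_theta_sub_of_mem_rVals (hR : D.IsDomRegion k R) (hα : α ∈ D.pos)
    (hceil : ∀ x ∈ R, ⟪x, α⟫ < r) (hx₀ : ⟪x₀, α⟫ = r)
    (hnear : ∀ᶠ y in 𝓝[{y | ⟪y, α⟫ = (r : ℝ)}] x₀, y ∈ closure R)
    {β : V} (hβ : β ∈ D.pos) {t : ℕ} (htk : t ≤ k) (ht : t ∈ D.rVals k (D.theta R) (α + β)) :
    β ∈ D.theta R (t - r) := by
  have hx₀R : x₀ ∈ closure R := hnear.self_of_nhdsWithin hx₀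
  have hβx₀ : 0 ≤ ⟪x₀, β⟫ := le_inner_of_mem_closure (fun x hx => (hR.2 x hx β hβ).le) hx₀R
  have hαβx₀ : ⟪x₀, α + β⟫ ≤ t :=
    inner_le_of_mem_closure (fun x hx => inner_le_of_mem_rVals_theta ht hx) hx₀R
  rw [inner_add_right, hx₀] at hαβx₀
  have hrt : r ≤ t := by exact_mod_cast (le_add_of_nonneg_right hβx₀).trans hαβx₀
  refine ⟨hβ, fun x hx => ?_⟩
  by_contra! hge
  have habove := hR.1.forall_lt_inner_of_le_inner hβ.1 (by omega) hx hge
  have hβx₀_eq : ⟪x₀, β⟫ = (t - r : ℕ) := by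
    refine le_antisymm ?_ (le_inner_of_mem_closure (fun y hy => (habove y hy).le) hx₀R)
    push_cast [hrt]
    linarith
  have hβα : β = α := D.eq_of_isExtrOn_of_eventually_mem (hR.2 x hx) hα hβ hx₀ hnear
    (IsMinOn.isExtr fun y hy => hβx₀_eq ▸ le_inner_of_mem_closure (fun y hy => (habove y hy).le) hy)
  subst hβα
  linarith [habove x hx, hceil x hx]

end Ceiling

end RootSystemData

/-- If `H_α^r` is a ceiling of a dominant region `R` of the `k`-Catalan
arrangement, then `α` is a rank `r` indecomposable element of `𝓘 = θ(R)`. -/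
theorem statement9 {V : Type*} [NormedAddCommGroup V] [InnerProductSpace ℝ V]
    (D : RootSystemData V) (k : ℕ) (R : Set V) (hR : D.IsDomRegion k R)
    (α : V) (hα : α ∈ D.pos) (r : ℕ) (hr : 1 ≤ r) (hrk : r ≤ k)
    (hc : D.IsCeiling R α (r : ℝ)) :
    D.IsIndec k (D.theta R) r α := by
  obtain ⟨hwall, -, hceil⟩ := hc
  obtain ⟨x₀, hx₀, hnear⟩ := hwall.exists_eventually_mem_closure
  have hmem : α ∈ D.theta R r := ⟨hα, hceil⟩
  exact ⟨hmem, D.isLeast_rVals_of_inner_eq hr hrk hmem hx₀ (hnear.self_of_nhdsWithin hx₀),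
    fun i j hij => D.notMem_theta_add_theta hR.2 hα hx₀ hnear hij,
    fun β hβ t htk ht => D.mem_theta_sub_of_mem_rVals hR hα hceil hx₀ hnear hβ htk ht.1⟩
end

section
/- Let R be a dominant region of the k-Catalan arrangement of Φ, B its pseudomaximal alcove (the maximal alcove of the bounded region θ⁻¹(𝓘̲) of the (k+1)-Catalan arrangement, where 𝓘 = θ(R)), and t ≤ k a positive integer. If ⟨x₀, α⟩ > t for some x₀ ∈ R, then ⟨x, α⟩ > t for all x ∈ B. -/
open scoped Pointwise RealInnerProductSpace

/-!
Let `r = r_α(𝓘̲)`, so that `r - 1 < ⟨x, α⟩` on `B`; it suffices to show `t < r`. If `r ≤ t ≤ k`,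
a decomposition `α = α₁ + ⋯ + α_m` with `αᵢ ∈ I̲_{rᵢ}` and `∑ rᵢ = r` only involves the ideals
`I̲_{rᵢ} = θ(R)_{rᵢ}`, on which `⟨x₀, ·⟩ < rᵢ`. Summing gives `⟨x₀, α⟩ ≤ r ≤ t`, a contradiction.
-/

namespace RootSystemData

variable {V : Type*} [NormedAddCommGroup V] [InnerProductSpace ℝ V] (D : RootSystemData V)

theorem mem_rVals_of_mem_rVals_Ibar {k N : ℕ} {I : ℕ → Set V} {α : V}
    (hN : N ∈ D.rVals (k + 1) (D.Ibar k I) α) (hNk : N ≤ k) : N ∈ D.rVals k I α := by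
  obtain ⟨m, a, r, hr, hsum, hrsum⟩ := hN
  refine ⟨m, a, r, fun i => ?_, hsum, hrsum⟩
  have hri : r i ≤ k :=
    (Finset.single_le_sum (fun j _ => Nat.zero_le (r j)) (Finset.mem_univ i)).trans
      (hrsum ▸ hNk)
  obtain ⟨h1, -, hmem⟩ := hr i
  rw [Ibar, if_pos hri] at hmem
  exact ⟨h1, hri, hmem⟩

theorem inner_le_of_mem_rVals {k N : ℕ} {I : ℕ → Set V} {x α : V}
    (hI : ∀ i, 1 ≤ i → i ≤ k → ∀ β ∈ I i, ⟪x, β⟫ < i) (hN : N ∈ D.rVals k I α) :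
    ⟪x, α⟫ ≤ N := by
  obtain ⟨m, a, r, hr, rfl, rfl⟩ := hN
  rw [inner_sum, Nat.cast_sum]
  exact Finset.sum_le_sum fun i _ => (hI (r i) (hr i).1 (hr i).2.1 (a i) (hr i).2.2).le

end RootSystemData

theorem statement10_general {V : Type*} [NormedAddCommGroup V] [InnerProductSpace ℝ V]
    (D : RootSystemData V) (k : ℕ) (R B : Set V)
    (hB : D.IsMaxAlcoveOf (k + 1) (D.Ibar k (D.theta R)) B)
    (t : ℕ) (htk : t ≤ k) (α : V) (hα : α ∈ D.pos)
    (x₀ : V) (hx₀ : x₀ ∈ R) (h : (t : ℝ) < (inner ℝ x₀ α : ℝ)) :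
    ∀ x ∈ B, (t : ℝ) < (inner ℝ x α : ℝ) := by
  obtain ⟨r, hr_least, hr_B⟩ := hB.2 α hα
  have htr : t < r := by
    by_contra! hrt
    have hx₀α : ⟪x₀, α⟫ ≤ r :=
      D.inner_le_of_mem_rVals (fun _ _ _ β hβ => hβ.2 x₀ hx₀)
        (D.mem_rVals_of_mem_rVals_Ibar hr_least.1 (hrt.trans htk))
    have : (r : ℝ) ≤ t := by exact_mod_cast hrt
    linarith
  intro x hx
  have : (t : ℝ) + 1 ≤ r := by exact_mod_cast htr
  linarith [(hr_B x hx).1]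

/-- Let `R` be a dominant region of the `k`-Catalan arrangement, `B` its
pseudomaximal alcove (the maximal alcove of the bounded region of the `(k+1)`-Catalan
arrangement corresponding to `𝓘̲`, where `𝓘 = θ(R)`), and `t ≤ k` a positive integer.
If `⟨x₀, α⟩ > t` for some `x₀ ∈ R`, then `⟨x, α⟩ > t` for all `x ∈ B`. -/
theorem statement10 {V : Type*} [NormedAddCommGroup V] [InnerProductSpace ℝ V]
    (D : RootSystemData V) (hirr : D.Irred) (k : ℕ) (R B : Set V)
    (hR : D.IsDomRegion k R)
    (hB : D.IsMaxAlcoveOf (k + 1) (D.Ibar k (D.theta R)) B)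
    (t : ℕ) (ht : 1 ≤ t) (htk : t ≤ k) (α : V) (hα : α ∈ D.pos)
    (x₀ : V) (hx₀ : x₀ ∈ R) (h : (t : ℝ) < (inner ℝ x₀ α : ℝ)) :
    ∀ x ∈ B, (t : ℝ) < (inner ℝ x α : ℝ) :=
  statement10_general D k R B hB t htk α hα x₀ hx₀ h
end
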